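/- Assume μ_1 < 0 < μ_n (a mixed case). Then for every β ∈ ℝ \ {μ_1, …, μ_n}, one has (β − μ_j)·g(β) > 0 for all j = 1, …, n if and only if β < μ_1. -/

import Mathlib

/-!
Write `g(β) = 1 + ∑ⱼ β / (μⱼ - β)`. When `β` lies strictly below all `μⱼ` with `β < 0`, or
strictly above all `μⱼ` with `β > 0`, every summand is negative, and the summand of an index
with `μⱼ(μⱼ - β) < 0` is even below `-1`, since `β / (μⱼ - β) + 1 = μⱼ / (μⱼ - β)`; hence
`g(β) < 0`. In the mixed case this applies to `β < μ₁` (take `j = 1`) and to `β > μₙ`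
(take `j = n`). Positivity of all `(β - μⱼ) g(β)` forces `β` to lie on one side of all the `μⱼ`,
and `β > μₙ` is excluded because it would need `g(β) > 0`.
-/

open Finset

namespace SecularFunction

variable {ι : Type*} [Fintype ι] (μ : ι → ℝ) {β : ℝ}

lemma div_sub_neg {m : ℝ} (h : β * (m - β) < 0) : β / (m - β) < 0 :=
  div_neg_iff.2 (mul_neg_iff.1 h)

lemma div_sub_lt_neg_one {m : ℝ} (h : m * (m - β) < 0) : β / (m - β) < -1 := by
  have hm : m - β ≠ 0 := by
    rintro hm
    simp [hm] at h
  have hshift : β / (m - β) + 1 = m / (m - β) := by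
    field_simp
    ring
  linarith [div_neg_iff.2 (mul_neg_iff.1 h)]

lemma one_add_sum_div_sub_neg (hβ : ∀ j, β * (μ j - β) < 0) {j₀ : ι}
    (hj₀ : μ j₀ * (μ j₀ - β) < 0) : 1 + ∑ j, β / (μ j - β) < 0 := by
  classical
  have hrest : ∑ j ∈ univ.erase j₀, β / (μ j - β) ≤ 0 :=
    sum_nonpos fun j _ => (div_sub_neg (hβ j)).le
  rw [← add_sum_erase _ _ (mem_univ j₀)]
  linarith [div_sub_lt_neg_one hj₀]

lemma one_add_sum_div_sub_neg_of_forall_lt (hβ : ∀ j, β < μ j) {j₀ : ι} (hj₀ : μ j₀ < 0) :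
    1 + ∑ j, β / (μ j - β) < 0 := by
  have hβneg : β < 0 := (hβ j₀).trans hj₀
  exact one_add_sum_div_sub_neg μ (fun j => mul_neg_of_neg_of_pos hβneg (sub_pos.2 (hβ j)))
    (mul_neg_of_neg_of_pos hj₀ (sub_pos.2 (hβ j₀)))

lemma one_add_sum_div_sub_neg_of_forall_gt (hβ : ∀ j, μ j < β) {j₀ : ι} (hj₀ : 0 < μ j₀) :
    1 + ∑ j, β / (μ j - β) < 0 := by
  have hβpos : 0 < β := hj₀.trans (hβ j₀)
  exact one_add_sum_div_sub_neg μ (fun j => mul_neg_of_pos_of_neg hβpos (sub_neg.2 (hβ j)))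
    (mul_neg_of_pos_of_neg hj₀ (sub_neg.2 (hβ j₀)))

end SecularFunction

open SecularFunction

/-- Mixed case `μ₁ < 0 < μₙ`: the positivity condition `(β - μⱼ)·g(β) > 0` for all `j`
holds precisely for `β < μ₁`. -/
theorem mixed_branch_interval (n : ℕ) (hn : 2 ≤ n) (μ : Fin n → ℝ) (hμ : Monotone μ)
    (g : ℝ → ℝ)
    (hg : ∀ β : ℝ, (∀ j, β ≠ μ j) → g β = 1 + β * ∑ j, 1 / (μ j - β))
    (hμ1 : μ ⟨0, by omega⟩ < 0) (hμn : 0 < μ ⟨n - 1, by omega⟩)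
    (β : ℝ) (hβ : ∀ j, β ≠ μ j) :
    (∀ j, 0 < (β - μ j) * g β) ↔ β < μ ⟨0, by omega⟩ := by
  have hgβ : g β = 1 + ∑ j, β / (μ j - β) := by
    simp only [hg β hβ, mul_sum, mul_one_div]
  constructor
  · intro hpos
    rcases mul_pos_iff.1 (hpos ⟨0, by omega⟩) with ⟨_, hg_pos⟩ | ⟨hβ0, _⟩
    · have habove : ∀ j, μ j < β := fun j => sub_pos.1 (pos_of_mul_pos_left (hpos j) hg_pos.le)
      linarith [one_add_sum_div_sub_neg_of_forall_gt μ habove hμn]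
    · exact sub_neg.1 hβ0
  · intro hlt j
    have hbelow : ∀ j, β < μ j := fun j => hlt.trans_le (hμ (Nat.zero_le j.val))
    rw [hgβ]
    exact mul_pos_of_neg_of_neg (sub_neg.2 (hbelow j))
      (one_add_sum_div_sub_neg_of_forall_lt μ hbelow hμ1)
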